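/- arXiv:math/0311051 — 4 statements merged into one kernel-verified Lean document; each statement's English description precedes it below -/
import Mathlib

section
/- Let r_n(x,z) be the twist-knot character variety polynomials defined by r_0 = 1, r_1 = z − 1, r_{n+1} = t·r_n − r_{n−1} with t = 2 + 2x − 2z − xz + z². Then for every negative integer n, the total degree of r_n(x,z) is −2n. -/
open MvPolynomial

private lemma coeff_single_zero (p : MvPolynomial (Fin 2) ℤ) {d e : ℕ}
    (hp : p.totalDegree ≤ d) (he : d < e) :
    coeff (Finsupp.single 1 e) p = 0 := by
  apply coeff_eq_zero_of_totalDegree_lt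
  have h : (∑ i ∈ (Finsupp.single (1 : Fin 2) e).support, (Finsupp.single (1 : Fin 2) e) i) = e := by
    rw [Finsupp.support_single_ne_zero _ (by omega : e ≠ 0)]
    simp
  omega

private lemma coeff_t_mul (p : MvPolynomial (Fin 2) ℤ) (d : ℕ) (hp : p.totalDegree ≤ d) :
    coeff (Finsupp.single 1 (d + 2))
      ((2 + 2 * X 0 - 2 * X 1 - X 0 * X 1 + (X 1) ^ 2) * p)
      = coeff (Finsupp.single 1 d) p := by
  have e1 : (2 + 2 * X 0 - 2 * X 1 - X 0 * X 1 + (X 1 : MvPolynomial (Fin 2) ℤ) ^ 2) * p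
      = ((p + p) + (X 0 * p + X 0 * p) - (X 1 * p + X 1 * p)
          - X 0 * (X 1 * p)) + X 1 * (X 1 * p) := by ring
  have hs2 : Finsupp.single (1 : Fin 2) (d + 2)
      = Finsupp.single 1 1 + Finsupp.single 1 (d + 1) := by
    rw [← Finsupp.single_add]; congr 1; omega
    
  have hs1 : Finsupp.single (1 : Fin 2) (d + 1)
      = Finsupp.single 1 1 + Finsupp.single 1 d := by
    rw [← Finsupp.single_add]; congr 1; omega
  have hx0 : ∀ q : MvPolynomial (Fin 2) ℤ,
      coeff (Finsupp.single 1 (d + 2)) (X 0 * q) = 0 := by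
    intro q
    rw [coeff_X_mul']
    rw [if_neg]
    simp [Finsupp.single_apply]
  have hp2 : coeff (Finsupp.single 1 (d + 2)) p = 0 := coeff_single_zero p hp (by omega)
  have hp1 : coeff (Finsupp.single 1 (d + 1)) p = 0 := coeff_single_zero p hp (by omega)
  rw [e1]
  simp only [coeff_add, coeff_sub, hx0, hp2]
  rw [hs2]
  simp only [coeff_X_mul]
  simp only [hp1]
  rw [hs1]
  simp only [coeff_X_mul]
  ring

private lemma degT_le :
    ((2 + 2 * X 0 - 2 * X 1 - X 0 * X 1 + (X 1) ^ 2 : MvPolynomial (Fin 2) ℤ)).totalDegree ≤ 2 := by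
  have hX : ∀ i : Fin 2, (X i : MvPolynomial (Fin 2) ℤ).totalDegree = 1 := fun i => totalDegree_X i
  have h2 : (2 : MvPolynomial (Fin 2) ℤ).totalDegree = 0 := by
    rw [show (2 : MvPolynomial (Fin 2) ℤ) = C 2 by simp]
    exact totalDegree_C _
  refine (totalDegree_add _ _).trans (max_le ((totalDegree_sub _ _).trans (max_le
    ((totalDegree_sub _ _).trans (max_le ((totalDegree_add _ _).trans (max_le ?_ ?_)) ?_)) ?_)) ?_)
  all_goals
    first
    | exact (totalDegree_pow _ _).trans (by simp [hX])
    | exact h2.le.trans (by norm_num)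
    | exact (totalDegree_mul _ _).trans (by simp [hX, h2])

theorem stmt_2 (r : ℤ → MvPolynomial (Fin 2) ℤ)
    (h0 : r 0 = 1)
    (h1 : r 1 = X 1 - 1)
    (hrec : ∀ n : ℤ, r (n + 1) =
      (2 + 2 * X 0 - 2 * X 1 - X 0 * X 1 + (X 1) ^ 2) * r n - r (n - 1)) :
    ∀ n : ℤ, n < 0 → (r n).totalDegree = (-2 * n).toNat := by
  have key : ∀ k : ℕ, (r (-(k : ℤ))).totalDegree ≤ 2 * k ∧
      coeff (Finsupp.single 1 (2 * k)) (r (-(k : ℤ))) = 1 ∧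
      (r (1 - (k : ℤ))).totalDegree ≤ 2 * k + 1 := by
    intro k
    induction k with
    | zero =>
      refine ⟨by simp [h0, totalDegree_one], by simp [h0], ?_⟩
      norm_num [h1]
      exact (totalDegree_sub _ _).trans (max_le (by simp [totalDegree_X]) (by simp))
    | succ k ih =>
      obtain ⟨ihd, ihc, ihp⟩ := ih
      have hmain : r (-((k : ℤ) + 1)) =
          (2 + 2 * X 0 - 2 * X 1 - X 0 * X 1 + (X 1) ^ 2) * r (-(k : ℤ)) - r (1 - (k : ℤ)) := by
        have h := hrec (-(k : ℤ))
        rw [show -(k : ℤ) + 1 = 1 - (k : ℤ) by ring, show -(k : ℤ) - 1 = -((k : ℤ) + 1) by ring] at h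
        linear_combination h
      push_cast
      rw [hmain]
      have hd : ((2 + 2 * X 0 - 2 * X 1 - X 0 * X 1 + (X 1) ^ 2) * r (-(k : ℤ))).totalDegree
          ≤ 2 * k + 2 := by
        refine (totalDegree_mul _ _).trans ?_
        have := degT_le
        omega
      refine ⟨?_, ?_, ?_⟩
      · refine (totalDegree_sub _ _).trans (max_le (by omega) (by omega))
      · rw [coeff_sub, show 2 * (k + 1) = 2 * k + 2 by ring, coeff_t_mul _ _ ihd, ihc,
          coeff_single_zero _ ihp (by omega)]
        ring
      · rw [show 1 - ((k : ℤ) + 1) = -(k : ℤ) by ring]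
        exact ihd.trans (by omega)
  intro n hn
  obtain ⟨ihd, ihc, -⟩ := key (-n).toNat
  have hn' : -((((-n).toNat : ℕ)) : ℤ) = n := by omega
  rw [hn'] at ihd ihc
  have hge : 2 * (-n).toNat ≤ (r n).totalDegree := by
    have hmem : Finsupp.single 1 (2 * (-n).toNat) ∈ (r n).support := by
      rw [mem_support_iff, ihc]; norm_num
    have := le_totalDegree hmem
    rwa [Finsupp.sum_single_index rfl] at this
  omega
end

section
/- Let a = [[m, 1], [0, 1/m]] and b = [[m, 0], [−q, 1/m]] be matrices in SL₂(ℂ) with m ≠ 0. Then a and b share a common one-dimensional eigenspace (i.e., there is a nonzero vector that is an eigenvector of both) if and only if q = 0 or q = (m − 1/m)². -/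
theorem stmt_4 (m q : ℂ) (hm : m ≠ 0)
    (a b : Matrix (Fin 2) (Fin 2) ℂ)
    (ha : a = !![m, 1; 0, m⁻¹])
    (hb : b = !![m, 0; -q, m⁻¹]) :
    (∃ v : Fin 2 → ℂ, v ≠ 0 ∧ ∃ lam mu : ℂ,
        a.mulVec v = lam • v ∧ b.mulVec v = mu • v) ↔
      q = 0 ∨ q = (m - 1 / m) ^ 2 := by
  subst ha hb
  constructor
  · rintro ⟨v, hv, lam, mu, hav, hbv⟩
    have h1 := congrFun hav 0
    have h2 := congrFun hav 1
    have h3 := congrFun hbv 0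
    have h4 := congrFun hbv 1
    simp [Matrix.mulVec, dotProduct, Fin.sum_univ_two] at h1 h2 h3 h4
    by_cases hy : v 1 = 0
    · left
      have hx : v 0 ≠ 0 := by
        intro hx
        apply hv
        funext i
        fin_cases i <;> simp [hx, hy]
      have hq0 : -(q * v 0) = 0 := by
        have := h4
        rw [hy] at this
        simpa using this
      have : q * v 0 = 0 := by linear_combination -hq0
      rcases mul_eq_zero.mp this with h | h
      · exact h
      · exact absurd h hx
    · have hlam : lam = m⁻¹ := (h2.resolve_right hy).symm
      subst hlam
      have hyx : v 1 = v 0 * (m⁻¹ - m) := by linear_combination h1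
      have hx : v 0 ≠ 0 := by
        intro hx
        exact hy (by rw [hyx, hx, zero_mul])
      have hmu : mu = m := (h3.resolve_right hx).symm
      right
      rw [hyx, hmu] at h4
      have hq : q * v 0 = (m - 1/m)^2 * v 0 := by
        field_simp at h4 ⊢
        ring_nf at h4 ⊢
        linear_combination -h4
      exact mul_right_cancel₀ hx hq
  · rintro (hq | hq)
    · refine ⟨![1, 0], ?_, m, m, ?_, ?_⟩
      · intro h; simpa using congrFun h 0
      · funext i; fin_cases i <;> simp [Matrix.mulVec, dotProduct, Fin.sum_univ_two]
      · funext i; fin_cases i <;> simp [Matrix.mulVec, dotProduct, Fin.sum_univ_two, hq]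
    · refine ⟨![1, m⁻¹ - m], ?_, m⁻¹, m, ?_, ?_⟩
      · intro h; simpa using congrFun h 0
      · funext i
        fin_cases i <;> simp [Matrix.mulVec, dotProduct, Fin.sum_univ_two] <;> field_simp <;> ring
      · funext i
        fin_cases i <;> simp [Matrix.mulVec, dotProduct, Fin.sum_univ_two, hq] <;> field_simp <;> ring
end

section
/- Let w = [[1 − 2q − 3q² − q³, 1 + 2q + q²], [−q(1 + 2q + q²), 1 + q + q²]] and denote by wⁿ_{ij} the entries of wⁿ. Then for every integer n: (1 + q)·wⁿ₁₁ + q(3 + q)·wⁿ₁₂ − (1 + q)·wⁿ₂₂ = 0. -/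
theorem stmt_9 (q : ℂ) (w : Matrix (Fin 2) (Fin 2) ℂ)
    (hw : w = !![1 - 2 * q - 3 * q ^ 2 - q ^ 3, 1 + 2 * q + q ^ 2;
                 -q * (1 + 2 * q + q ^ 2), 1 + q + q ^ 2]) :
    ∀ n : ℤ, (1 + q) * (w ^ n) 0 0 + q * (3 + q) * (w ^ n) 0 1
      - (1 + q) * (w ^ n) 1 1 = 0 := by
  intro n
  by_cases hq : q = -1
  · subst hq hw
    have h1 : (!![1 - 2 * (-1:ℂ) - 3 * (-1) ^ 2 - (-1) ^ 3, 1 + 2 * (-1) + (-1) ^ 2;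
        -(-1) * (1 + 2 * (-1) + (-1) ^ 2), 1 + (-1) + (-1) ^ 2] : Matrix (Fin 2) (Fin 2) ℂ) = 1 := by
      ext i j
      fin_cases i <;> fin_cases j <;> simp [Matrix.one_apply] <;> norm_num
    rw [h1, Matrix.one_zpow]
    simp [Matrix.one_apply]
  · have hdet : IsUnit w.det := by
      rw [hw, Matrix.det_fin_two_of]
      have : (1 - 2 * q - 3 * q ^ 2 - q ^ 3) * (1 + q + q ^ 2) -
          (1 + 2 * q + q ^ 2) * (-q * (1 + 2 * q + q ^ 2)) = 1 := by ring
      rw [this]; exact isUnit_one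
    have hcomm : w ^ n * w = w * w ^ n := by
      rw [← Matrix.zpow_add_one hdet n, show n + 1 = 1 + n by ring,
        Matrix.zpow_add hdet 1 n, zpow_one]
    have e00 : w 0 0 = 1 - 2 * q - 3 * q ^ 2 - q ^ 3 := by rw [hw]; simp
    have e01 : w 0 1 = 1 + 2 * q + q ^ 2 := by rw [hw]; simp
    have e11 : w 1 1 = 1 + q + q ^ 2 := by rw [hw]; simp
    have h01 := congrFun (congrFun hcomm 0) 1
    rw [Matrix.mul_apply, Matrix.mul_apply, Fin.sum_univ_two, Fin.sum_univ_two,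
      e00, e01, e11] at h01
    have hq' : (1:ℂ) + q ≠ 0 := by
      intro h; apply hq; linear_combination h
    apply mul_left_cancel₀ hq'
    rw [mul_zero]
    linear_combination h01
end

section
/- Let s_n(x,z) be defined by s_0 = 1, s_1 = 3 + 2x − 3z − xz + z², and s_{n+1} = t·s_n − s_{n−1} with t(x,z) = −4x − 2x² + 5z + 6xz + x²z − 4z² − 2xz² + z³. Then for every negative integer n, the total degree of s_n(x,z) equals −3n, and the leading coefficient of the one-variable polynomial s_n(x,x) is 2 with degree −n (i.e., s_n(x,x) = 2x^{−n} + lower-order terms). -/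
open MvPolynomial

noncomputable def Tpoly : MvPolynomial (Fin 2) ℤ :=
  -4 * X 0 - 2 * (X 0) ^ 2 + 5 * X 1 + 6 * X 0 * X 1 + (X 0) ^ 2 * X 1
    - 4 * (X 1) ^ 2 - 2 * X 0 * (X 1) ^ 2 + (X 1) ^ 3

lemma td_add {a b : MvPolynomial (Fin 2) ℤ} {n : ℕ} (ha : a.totalDegree ≤ n)
    (hb : b.totalDegree ≤ n) : (a + b).totalDegree ≤ n :=
  (totalDegree_add a b).trans (max_le ha hb)

lemma td_sub {a b : MvPolynomial (Fin 2) ℤ} {n : ℕ} (ha : a.totalDegree ≤ n)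
    (hb : b.totalDegree ≤ n) : (a - b).totalDegree ≤ n :=
  (totalDegree_sub a b).trans (max_le ha hb)

lemma td_mul {a b : MvPolynomial (Fin 2) ℤ} {m n : ℕ} (ha : a.totalDegree ≤ m)
    (hb : b.totalDegree ≤ n) : (a * b).totalDegree ≤ m + n :=
  (totalDegree_mul a b).trans (add_le_add ha hb)

lemma td_num (z : ℤ) {n : ℕ} : ((C z : MvPolynomial (Fin 2) ℤ)).totalDegree ≤ n :=
  le_of_eq_of_le (totalDegree_C z) (Nat.zero_le n)

lemma td_X (i : Fin 2) {n : ℕ} (h : 1 ≤ n) : (X i : MvPolynomial (Fin 2) ℤ).totalDegree ≤ n := by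
  simp [totalDegree_X, h]

lemma td_ofNat (m : ℕ) [m.AtLeastTwo] {n : ℕ} :
    ((OfNat.ofNat m : MvPolynomial (Fin 2) ℤ)).totalDegree ≤ n := by
  rw [← map_ofNat (C : ℤ →+* MvPolynomial (Fin 2) ℤ) m]
  exact td_num _

lemma tdT : Tpoly.totalDegree ≤ 3 := by
  have hn4 : ((-4 : MvPolynomial (Fin 2) ℤ)).totalDegree ≤ 0 := by
    rw [show ((-4 : MvPolynomial (Fin 2) ℤ)) = -(4) by ring, totalDegree_neg]
    exact td_ofNat 4
  have hx0 : (X 0 : MvPolynomial (Fin 2) ℤ).totalDegree ≤ 1 := td_X 0 le_rfl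
  have hx1 : (X 1 : MvPolynomial (Fin 2) ℤ).totalDegree ≤ 1 := td_X 1 le_rfl
  have hx0sq : ((X 0 : MvPolynomial (Fin 2) ℤ)^2).totalDegree ≤ 2 := by
    rw [sq]; exact td_mul hx0 hx0
  have hx1sq : ((X 1 : MvPolynomial (Fin 2) ℤ)^2).totalDegree ≤ 2 := by
    rw [sq]; exact td_mul hx1 hx1
  have hx1cb : ((X 1 : MvPolynomial (Fin 2) ℤ)^3).totalDegree ≤ 3 := by
    rw [pow_succ]; exact td_mul hx1sq hx1
  unfold Tpoly
  refine td_add (td_sub (td_sub (td_add (td_add (td_add (td_sub ?_ ?_) ?_) ?_) ?_) ?_) ?_) hx1cb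
  · exact (td_mul (m := 0) (n := 1) hn4 hx0).trans (by norm_num)
  · exact (td_mul (m := 0) (n := 2) (td_ofNat 2) hx0sq).trans (by norm_num)
  · exact (td_mul (m := 0) (n := 1) (td_ofNat 5) hx1).trans (by norm_num)
  · exact (td_mul (m := 1) (n := 1) (td_mul (m := 0) (n := 1) (td_ofNat 6) hx0) hx1).trans
      (by norm_num)
  · exact td_mul hx0sq hx1
  · exact (td_mul (m := 0) (n := 2) (td_ofNat 4) hx1sq).trans (by norm_num)
  · exact (td_mul (m := 1) (n := 2) (td_mul (m := 0) (n := 1) (td_ofNat 2) hx0) hx1sq).trans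
      (by norm_num)

lemma tdS1 : ((3 + 2 * X 0 - 3 * X 1 - X 0 * X 1 + (X 1) ^ 2 :
    MvPolynomial (Fin 2) ℤ)).totalDegree ≤ 3 := by
  have hx0 : (X 0 : MvPolynomial (Fin 2) ℤ).totalDegree ≤ 1 := td_X 0 le_rfl
  have hx1 : (X 1 : MvPolynomial (Fin 2) ℤ).totalDegree ≤ 1 := td_X 1 le_rfl
  refine td_add (td_sub (td_sub (td_add (td_ofNat 3) ?_) ?_)
    ((td_mul hx0 hx1).trans (by norm_num))) ?_
  · exact (td_mul (m := 0) (n := 1) (td_ofNat 2) hx0).trans (by norm_num)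
  · exact (td_mul (m := 0) (n := 1) (td_ofNat 3) hx1).trans (by norm_num)
  · rw [sq]; exact (td_mul hx1 hx1).trans (by norm_num)

lemma poly_step {T a b : Polynomial ℤ} {dT da db : ℕ} {c : ℤ}
    (hT : T.Monic) (hTd : T.natDegree = dT)
    (ha : a.natDegree = da) (hla : a.leadingCoeff = c) (hc : c ≠ 0)
    (hb : b.natDegree ≤ db) (h : db < dT + da) :
    (T * a - b).natDegree = dT + da ∧ (T * a - b).leadingCoeff = c := by
  have ha0 : a ≠ 0 := fun h0 => hc (by simp [h0] at hla; exact hla.symm)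
  have hmul : (T * a).natDegree = dT + da := by
    rw [Polynomial.natDegree_mul hT.ne_zero ha0, hTd, ha]
  have hlt : b.natDegree < (T * a).natDegree := by omega
  refine ⟨by rw [Polynomial.natDegree_sub_eq_left_of_natDegree_lt hlt, hmul], ?_⟩
  rw [Polynomial.leadingCoeff_sub_of_degree_lt (Polynomial.degree_lt_degree hlt),
    Polynomial.leadingCoeff_mul, hT.leadingCoeff, hla, one_mul]

lemma T0_eq : (MvPolynomial.aeval ![(0 : Polynomial ℤ), Polynomial.X] Tpoly) =
    Polynomial.X ^ 3 - 4 * Polynomial.X ^ 2 + 5 * Polynomial.X := by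
  simp [Tpoly]; ring

lemma Td_eq : (MvPolynomial.aeval ![Polynomial.X, (Polynomial.X : Polynomial ℤ)] Tpoly) =
    Polynomial.X := by
  simp [Tpoly]; ring

lemma T0_deg : (Polynomial.X ^ 3 - 4 * Polynomial.X ^ 2 + 5 * Polynomial.X :
    Polynomial ℤ).natDegree = 3 := by compute_degree!

lemma T0_monic : (Polynomial.X ^ 3 - 4 * Polynomial.X ^ 2 + 5 * Polynomial.X :
    Polynomial ℤ).Monic := by
  rw [Polynomial.Monic, Polynomial.leadingCoeff, T0_deg]; compute_degree!

theorem stmt_14 (s : ℤ → MvPolynomial (Fin 2) ℤ)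
    (h0 : s 0 = 1)
    (h1 : s 1 = 3 + 2 * X 0 - 3 * X 1 - X 0 * X 1 + (X 1) ^ 2)
    (hrec : ∀ n : ℤ, s (n + 1) =
      (-4 * X 0 - 2 * (X 0) ^ 2 + 5 * X 1 + 6 * X 0 * X 1 + (X 0) ^ 2 * X 1
        - 4 * (X 1) ^ 2 - 2 * X 0 * (X 1) ^ 2 + (X 1) ^ 3) * s n - s (n - 1)) :
    ∀ n : ℤ, n < 0 →
      (s n).totalDegree = (-3 * n).toNat ∧
      (MvPolynomial.aeval ![Polynomial.X, Polynomial.X] (s n) : Polynomial ℤ).natDegree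
        = (-n).toNat ∧
      (MvPolynomial.aeval ![Polynomial.X, Polynomial.X] (s n) : Polynomial ℤ).leadingCoeff
        = 2 := by
  have hrec' : ∀ n : ℤ, s (n - 1) = Tpoly * s n - s (n + 1) := by
    intro n
    have h := hrec n
    rw [show (-4 * X 0 - 2 * (X 0) ^ 2 + 5 * X 1 + 6 * X 0 * X 1 + (X 0) ^ 2 * X 1
        - 4 * (X 1) ^ 2 - 2 * X 0 * (X 1) ^ 2 + (X 1) ^ 3 : MvPolynomial (Fin 2) ℤ)
        = Tpoly from rfl] at h
    linear_combination h
  -- weak invariant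
  have deg_le_one : ∀ i : Fin 2, (![(0 : Polynomial ℤ), Polynomial.X] i).natDegree ≤ 1 :=
    fun i => by fin_cases i <;> simp
  have deg_le_one' : ∀ i : Fin 2, (![(Polynomial.X : Polynomial ℤ), Polynomial.X] i).natDegree ≤ 1 :=
    fun i => by fin_cases i <;> simp
  set W : ℕ → Prop := fun k =>
    (s (-(k:ℤ))).totalDegree ≤ 3 * k ∧
    (MvPolynomial.aeval ![Polynomial.X, Polynomial.X] (s (-(k:ℤ))) : Polynomial ℤ).natDegree ≤ k
    with hW
  set P : ℕ → Prop := fun k =>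
    (s (-(k:ℤ))).totalDegree ≤ 3 * k ∧
    (MvPolynomial.aeval ![(0:Polynomial ℤ), Polynomial.X] (s (-(k:ℤ))) : Polynomial ℤ).natDegree
      = 3 * k ∧
    (MvPolynomial.aeval ![(0:Polynomial ℤ), Polynomial.X] (s (-(k:ℤ))) : Polynomial ℤ).leadingCoeff
      = 1 ∧
    (MvPolynomial.aeval ![Polynomial.X, Polynomial.X] (s (-(k:ℤ))) : Polynomial ℤ).natDegree = k ∧
    (MvPolynomial.aeval ![Polynomial.X, Polynomial.X] (s (-(k:ℤ))) : Polynomial ℤ).leadingCoeff = 2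
    with hP
  have hPW : ∀ k, P k → W k := by
    rintro k ⟨a, _, _, c, _⟩
    exact ⟨a, c.le⟩
  -- the step
  have step : ∀ k : ℕ, W k → P (k + 1) → P (k + 2) := by
    rintro k ⟨hw1, hw2⟩ ⟨hp1, hp2, hp3, hp4, hp5⟩
    have hkey : s (-(((k+2:ℕ)):ℤ)) = Tpoly * s (-(((k+1:ℕ)):ℤ)) - s (-(k:ℤ)) := by
      have h := hrec' (-((k:ℤ)+1))
      rw [show (-((k:ℤ)+1) - 1) = -(((k+2:ℕ)):ℤ) by push_cast; ring,
        show (-((k:ℤ)+1) + 1) = -(k:ℤ) by ring,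
        show (-((k:ℤ)+1)) = -(((k+1:ℕ)):ℤ) by push_cast; ring] at h
      exact h
    have hA0q : (MvPolynomial.aeval ![(0:Polynomial ℤ), Polynomial.X] (s (-(k:ℤ))) :
        Polynomial ℤ).natDegree ≤ 3 * k := by
      have h := MvPolynomial.aeval_natDegree_le (n := 1) (s (-(k:ℤ))) hw1
        ![(0 : Polynomial ℤ), Polynomial.X] deg_le_one
      omega
    have h0part := poly_step (dT := 3) (da := 3*(k+1)) (db := 3*k)
      (T := MvPolynomial.aeval ![(0:Polynomial ℤ), Polynomial.X] Tpoly)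
      (a := MvPolynomial.aeval ![(0:Polynomial ℤ), Polynomial.X] (s (-(((k+1:ℕ)):ℤ))))
      (b := MvPolynomial.aeval ![(0:Polynomial ℤ), Polynomial.X] (s (-(k:ℤ)))) (c := 1)
      (by rw [T0_eq]; exact T0_monic) (by rw [T0_eq]; exact T0_deg) hp2 hp3 one_ne_zero
      hA0q (by omega)
    have hdpart := poly_step (dT := 1) (da := k+1) (db := k)
      (T := MvPolynomial.aeval ![(Polynomial.X:Polynomial ℤ), Polynomial.X] Tpoly)
      (a := MvPolynomial.aeval ![(Polynomial.X:Polynomial ℤ), Polynomial.X] (s (-(((k+1:ℕ)):ℤ))))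
      (b := MvPolynomial.aeval ![(Polynomial.X:Polynomial ℤ), Polynomial.X] (s (-(k:ℤ)))) (c := 2)
      (by rw [Td_eq]; exact Polynomial.monic_X) (by rw [Td_eq]; exact Polynomial.natDegree_X)
      hp4 hp5 two_ne_zero hw2 (by omega)
    rw [hP]
    refine ⟨?_, ?_, ?_, ?_, ?_⟩ <;> rw [hkey]
    · exact td_sub ((td_mul tdT hp1).trans (by omega)) (hw1.trans (by omega))
    · rw [map_sub, map_mul, h0part.1]; omega
    · rw [map_sub, map_mul]; exact h0part.2
    · rw [map_sub, map_mul, hdpart.1]; omega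
    · rw [map_sub, map_mul]; exact hdpart.2
  -- base cases
  have hW0 : W 0 := by
    rw [hW]
    constructor <;> simp [h0]
  have hsm1 : s (-1) = Tpoly - (3 + 2 * X 0 - 3 * X 1 - X 0 * X 1 + (X 1) ^ 2) := by
    have h := hrec' 0
    rw [show ((0:ℤ) - 1) = -1 by ring, show ((0:ℤ) + 1) = 1 by ring, h0, h1, mul_one] at h
    exact h
  have hP1 : P 1 := by
    have e1 : (-((1:ℕ):ℤ)) = (-1 : ℤ) := by norm_num
    have hA0m1 : (MvPolynomial.aeval ![(0:Polynomial ℤ), Polynomial.X] (s (-1)) : Polynomial ℤ)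
        = Polynomial.X ^ 3 - 5 * Polynomial.X ^ 2 + 8 * Polynomial.X - 3 := by
      rw [hsm1, map_sub, T0_eq]
      simp
      ring
    have hAdm1 : (MvPolynomial.aeval ![(Polynomial.X:Polynomial ℤ), Polynomial.X] (s (-1)) :
        Polynomial ℤ) = 2 * Polynomial.X - 3 := by
      rw [hsm1, map_sub, Td_eq]
      simp
      ring
    rw [hP]
    refine ⟨?_, ?_, ?_, ?_, ?_⟩ <;> rw [e1]
    · rw [hsm1]; exact (td_sub tdT tdS1).trans (by norm_num)
    · rw [hA0m1]; compute_degree!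
    · rw [Polynomial.leadingCoeff, hA0m1]
      rw [show (Polynomial.X ^ 3 - 5 * Polynomial.X ^ 2 + 8 * Polynomial.X - 3 :
        Polynomial ℤ).natDegree = 3 by compute_degree!]
      compute_degree!
    · rw [hAdm1]; compute_degree!
    · rw [Polynomial.leadingCoeff, hAdm1]
      rw [show (2 * Polynomial.X - 3 : Polynomial ℤ).natDegree = 1 by compute_degree!]
      compute_degree!
  have main : ∀ k : ℕ, W k ∧ P (k + 1) := by
    intro k
    induction k with
    | zero => exact ⟨hW0, hP1⟩
    | succ m ih => exact ⟨hPW _ ih.2, step m ih.1 ih.2⟩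
  intro n hn
  obtain ⟨k, hk⟩ : ∃ k : ℕ, n = -(((k+1:ℕ)):ℤ) := ⟨((-n).toNat - 1), by push_cast; omega⟩
  obtain ⟨q1, q2, q3, q4, q5⟩ := (main k).2
  rw [hk]
  have hge : 3 * (k+1) ≤ (s (-(((k+1:ℕ)):ℤ))).totalDegree := by
    have h := MvPolynomial.aeval_natDegree_le (n := 1) (s (-(((k+1:ℕ)):ℤ)))
      le_rfl ![(0 : Polynomial ℤ), Polynomial.X] deg_le_one
    omega
  refine ⟨?_, ?_, ?_⟩
  · have heq : (s (-(((k+1:ℕ)):ℤ))).totalDegree = 3 * (k+1) := le_antisymm q1 hge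
    rw [heq]; push_cast; omega
  · rw [q4]; push_cast; omega
  · exact q5
end
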